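/- Let (Ω, ℱ, P) be a probability space and let x, y : Ω → ℝᵐ be square-integrable random vectors such that Var(x_j | σ(y)) ≤ 1 almost surely for every j. Let f : ℝᵐ → ℝᵐ be measurable with f∘x square-integrable, let J ⊆ {1,…,m} be a nonempty subset, and let g : Ω → ℝᴶ be a square-integrable random vector with Cov(g_j, x_j | σ(y)) = 0 almost surely for every j ∈ J. Then (1/|J|) · Σ_{j∈J} E[ Cov(f(x)_j, x_j | σ(y)) ] ≤ ( (1/|J|) · Σ_{j∈J} E[ (f(x)_j − g_j)² ] )^{1/2}. -/

import Mathlib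

open MeasureTheory Finset

/-- Conditional expectation `E[f | 𝒢]` under measure `μ` (ambient σ-algebra `mΩ`). -/
noncomputable def condExpect {Ω : Type*} {mΩ : MeasurableSpace Ω} (𝒢 : MeasurableSpace Ω)
    (μ : @Measure Ω mΩ) {E : Type*} [NormedAddCommGroup E] [NormedSpace ℝ E] [CompleteSpace E]
    (f : Ω → E) : Ω → E :=
  MeasureTheory.condExp (m₀ := mΩ) 𝒢 μ f

/-- Conditional covariance of two real random variables given a sub-σ-algebra `𝒢`:
`Cov(U, V | 𝒢) = E[U·V | 𝒢] − E[U | 𝒢]·E[V | 𝒢]`. -/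
noncomputable def condCov {Ω : Type*} {mΩ : MeasurableSpace Ω} (𝒢 : MeasurableSpace Ω)
    (μ : @Measure Ω mΩ) (U V : Ω → ℝ) : Ω → ℝ :=
  fun ω => condExpect 𝒢 μ (fun ω' => U ω' * V ω') ω
    - condExpect 𝒢 μ U ω * condExpect 𝒢 μ V ω

/-- Conditional variance: `Var(U | 𝒢) = Cov(U, U | 𝒢)`. -/
noncomputable def condVar {Ω : Type*} {mΩ : MeasurableSpace Ω} (𝒢 : MeasurableSpace Ω)
    (μ : @Measure Ω mΩ) (U : Ω → ℝ) : Ω → ℝ :=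
  condCov 𝒢 μ U U

/-!
For `j ∈ J` write `U = f(x)ⱼ`, `V = xⱼ`, `G = gⱼ` and `Ṽ = V - E[V | σ(y)]`. The pull-out
property gives `E[Cov(U, V | σ(y))] = E[U Ṽ]` and `E[Ṽ²] = E[Var(V | σ(y))] ≤ 1`. As
`E[G Ṽ] = E[Cov(G, V | σ(y))] = 0`, Cauchy–Schwarz yields
`E[Cov(U, V | σ(y))] = E[(U - G) Ṽ] ≤ E[(U - G)²]^{1/2}`, and averaging over `J` preserves the
bound by concavity of the square root.
-/

section

variable {Ω : Type*} {m mΩ : MeasurableSpace Ω} {μ : Measure[mΩ] Ω}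

theorem integral_mul_le_sqrt_mul_sqrt {h k : Ω → ℝ} (hh : MemLp h 2 μ) (hk : MemLp k 2 μ) :
    ∫ ω, h ω * k ω ∂μ ≤ √(∫ ω, h ω ^ 2 ∂μ) * √(∫ ω, k ω ^ 2 ∂μ) := by
  have inner_toLp : ∀ {u v : Ω → ℝ} (hu : MemLp u 2 μ) (hv : MemLp v 2 μ),
      inner ℝ (hu.toLp u) (hv.toLp v) = ∫ ω, u ω * v ω ∂μ := by
    intro u v hu hv
    rw [L2.inner_def]
    refine integral_congr_ae ?_
    filter_upwards [hu.coeFn_toLp, hv.coeFn_toLp] with ω hu' hv'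
    simp [hu', hv', mul_comm]
  have norm_toLp : ∀ {u : Ω → ℝ} (hu : MemLp u 2 μ), ‖hu.toLp u‖ = √(∫ ω, u ω ^ 2 ∂μ) := by
    intro u hu
    rw [← Real.sqrt_sq (norm_nonneg _), ← real_inner_self_eq_norm_sq, inner_toLp hu hu]
    simp_rw [sq]
  rw [← inner_toLp hh hk, ← norm_toLp hh, ← norm_toLp hk]
  exact real_inner_le_norm _ _

theorem MeasureTheory.MemLp.integrable_mul_of_two {f g : Ω → ℝ} (hf : MemLp f 2 μ)
    (hg : MemLp g 2 μ) :
    Integrable (fun ω => f ω * g ω) μ :=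
  hf.integrable_mul hg

theorem integrable_condCov {U V : Ω → ℝ} (hU : MemLp U 2 μ) (hV : MemLp V 2 μ) :
    Integrable (condCov m μ U V) μ :=
  integrable_condExp.sub <|
    (hU.condExp one_le_two).integrable_mul_of_two (hV.condExp one_le_two)

variable [IsFiniteMeasure μ]

theorem integral_mul_condExp_of_stronglyMeasurable (hm : m ≤ mΩ) {φ V : Ω → ℝ}
    (hφm : StronglyMeasurable[m] φ) (hφ : MemLp φ 2 μ) (hV : MemLp V 2 μ) :
    ∫ ω, φ ω * μ[V|m] ω ∂μ = ∫ ω, φ ω * V ω ∂μ := by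
  calc ∫ ω, φ ω * μ[V|m] ω ∂μ = ∫ ω, μ[φ * V|m] ω ∂μ :=
        integral_congr_ae (condExp_mul_of_stronglyMeasurable_left hφm
          (hφ.integrable_mul_of_two hV) (hV.integrable one_le_two)).symm
    _ = ∫ ω, φ ω * V ω ∂μ := integral_condExp hm

theorem integral_mul_sub_condExp_eq_zero (hm : m ≤ mΩ) {φ V : Ω → ℝ}
    (hφm : StronglyMeasurable[m] φ) (hφ : MemLp φ 2 μ) (hV : MemLp V 2 μ) :
    ∫ ω, φ ω * (V ω - μ[V|m] ω) ∂μ = 0 := by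
  simp_rw [mul_sub]
  rw [integral_sub (hφ.integrable_mul_of_two hV)
      (hφ.integrable_mul_of_two (hV.condExp one_le_two)),
    integral_mul_condExp_of_stronglyMeasurable hm hφm hφ hV, sub_self]

theorem integral_condCov (hm : m ≤ mΩ) {U V : Ω → ℝ} (hU : MemLp U 2 μ) (hV : MemLp V 2 μ) :
    ∫ ω, condCov m μ U V ω ∂μ = ∫ ω, U ω * (V ω - μ[V|m] ω) ∂μ := by
  have hEV := hV.condExp (m := m) one_le_two
  have hEU := hU.condExp (m := m) one_le_two
  calc ∫ ω, condCov m μ U V ω ∂μ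
      = ∫ ω, U ω * V ω ∂μ - ∫ ω, μ[U|m] ω * μ[V|m] ω ∂μ := by
        simp only [condCov, condExpect]
        rw [integral_sub integrable_condExp (hEU.integrable_mul_of_two hEV)]
        exact congrArg (· - _) (integral_condExp hm)
    _ = ∫ ω, U ω * V ω ∂μ - ∫ ω, U ω * μ[V|m] ω ∂μ := by
        simp_rw [mul_comm (μ[U|m] _), mul_comm (U _) (μ[V|m] _)]
        rw [integral_mul_condExp_of_stronglyMeasurable hm stronglyMeasurable_condExp hEV hU]
    _ = ∫ ω, U ω * (V ω - μ[V|m] ω) ∂μ := by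
        simp_rw [mul_sub]
        exact (integral_sub (hU.integrable_mul_of_two hV) (hU.integrable_mul_of_two hEV)).symm

theorem integral_sq_sub_condExp (hm : m ≤ mΩ) {V : Ω → ℝ} (hV : MemLp V 2 μ) :
    ∫ ω, (V ω - μ[V|m] ω) ^ 2 ∂μ = ∫ ω, condVar m μ V ω ∂μ := by
  have hEV := hV.condExp (m := m) one_le_two
  have hVd : MemLp (fun ω => V ω - μ[V|m] ω) 2 μ := hV.sub hEV
  rw [condVar, integral_condCov hm hV hV, ← sub_zero (∫ ω, V ω * _ ∂μ),
    ← integral_mul_sub_condExp_eq_zero hm stronglyMeasurable_condExp hEV hV,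
    ← integral_sub (hV.integrable_mul_of_two hVd) (hEV.integrable_mul_of_two hVd)]
  congr 1 with ω
  ring

theorem integral_condCov_le_sqrt_mul_sqrt (hm : m ≤ mΩ) {U V G : Ω → ℝ} (hU : MemLp U 2 μ)
    (hV : MemLp V 2 μ) (hG : MemLp G 2 μ) (hcov : ∀ᵐ ω ∂μ, condCov m μ G V ω = 0) :
    ∫ ω, condCov m μ U V ω ∂μ ≤
      √(∫ ω, (U ω - G ω) ^ 2 ∂μ) * √(∫ ω, condVar m μ V ω ∂μ) := by
  have hVd : MemLp (fun ω => V ω - μ[V|m] ω) 2 μ := hV.sub (hV.condExp one_le_two)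
  have hG_orth : ∫ ω, G ω * (V ω - μ[V|m] ω) ∂μ = 0 := by
    rw [← integral_condCov hm hG hV]
    exact integral_eq_zero_of_ae hcov
  calc ∫ ω, condCov m μ U V ω ∂μ = ∫ ω, (U ω - G ω) * (V ω - μ[V|m] ω) ∂μ := by
        simp_rw [sub_mul (U _)]
        rw [integral_sub (hU.integrable_mul_of_two hVd) (hG.integrable_mul_of_two hVd), hG_orth,
          sub_zero, integral_condCov hm hU hV]
    _ ≤ _ := by
        rw [← integral_sq_sub_condExp hm hV]
        exact integral_mul_le_sqrt_mul_sqrt (hU.sub hG) hVd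

end

theorem Finset.one_div_card_mul_sum_sqrt_le_sqrt {ι : Type*} (s : Finset ι) {b : ι → ℝ}
    (hb : ∀ i, 0 ≤ b i) :
    (1 / (#s : ℝ)) * ∑ i ∈ s, √(b i) ≤ √((1 / (#s : ℝ)) * ∑ i ∈ s, b i) := by
  have h := Real.sum_sqrt_mul_sqrt_le s (fun _ => zero_le_one) hb
  simp only [Real.sqrt_one, one_mul, sum_const, nsmul_eq_mul, mul_one] at h
  calc (1 / (#s : ℝ)) * ∑ i ∈ s, √(b i) ≤ (1 / (#s : ℝ)) * (√(#s : ℝ) * √(∑ i ∈ s, b i)) :=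
        mul_le_mul_of_nonneg_left h (by positivity)
    _ = √((1 / (#s : ℝ)) * ∑ i ∈ s, b i) := by
        rw [← mul_assoc, one_div_mul_eq_div, Real.sqrt_div_self', Real.sqrt_mul (by positivity),
          Real.sqrt_div' _ (Nat.cast_nonneg _), Real.sqrt_one]

theorem avg_condCov_le_sqrt_avg_sq_diff_general
    {Ω : Type*} [mΩ : MeasurableSpace Ω] (P : Measure Ω) [IsProbabilityMeasure P]
    (m : ℕ) (x y : Ω → EuclideanSpace ℝ (Fin m))
    (hym : Measurable y)
    (hx : MemLp x 2 P)
    (hvar : ∀ j : Fin m, ∀ᵐ ω ∂P,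
      condVar (MeasurableSpace.comap y inferInstance) P (fun ω' => x ω' j) ω ≤ 1)
    (f : EuclideanSpace ℝ (Fin m) → EuclideanSpace ℝ (Fin m))
    (hfx : MemLp (fun ω => f (x ω)) 2 P)
    (J : Finset (Fin m))
    (g : Fin m → Ω → ℝ) (hg : ∀ j ∈ J, MemLp (g j) 2 P)
    (hgcov : ∀ j ∈ J, ∀ᵐ ω ∂P,
      condCov (MeasurableSpace.comap y inferInstance) P (g j) (fun ω' => x ω' j) ω = 0) :
    (1 / (J.card : ℝ)) * ∑ j ∈ J, ∫ ω, condCov (MeasurableSpace.comap y inferInstance) P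
        (fun ω' => f (x ω') j) (fun ω' => x ω' j) ω ∂P ≤
      Real.sqrt ((1 / (J.card : ℝ)) * ∑ j ∈ J, ∫ ω, (f (x ω) j - g j ω) ^ 2 ∂P) := by
  set 𝒢 : MeasurableSpace Ω := MeasurableSpace.comap y inferInstance
  have hm : 𝒢 ≤ mΩ := hym.comap_le
  have hterm : ∀ j ∈ J, ∫ ω, condCov 𝒢 P (fun ω' => f (x ω') j) (fun ω' => x ω' j) ω ∂P ≤
      √(∫ ω, (f (x ω) j - g j ω) ^ 2 ∂P) := by
    intro j hj
    have hxj : MemLp (fun ω => x ω j) 2 P := hx.eval_piLp j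
    have hvar_int : ∫ ω, condVar 𝒢 P (fun ω' => x ω' j) ω ∂P ≤ 1 :=
      calc _ ≤ ∫ _, (1 : ℝ) ∂P :=
            integral_mono_ae (integrable_condCov hxj hxj) (integrable_const 1) (hvar j)
        _ = 1 := by simp
    calc _ ≤ _ :=
          integral_condCov_le_sqrt_mul_sqrt hm (hfx.eval_piLp j) hxj (hg j hj) (hgcov j hj)
      _ ≤ _ := mul_le_of_le_one_right (Real.sqrt_nonneg _) (Real.sqrt_le_one.2 hvar_int)
  calc _ ≤ (1 / (#J : ℝ)) * ∑ j ∈ J, √(∫ ω, (f (x ω) j - g j ω) ^ 2 ∂P) :=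
        mul_le_mul_of_nonneg_left (sum_le_sum hterm) (by positivity)
    _ ≤ _ := one_div_card_mul_sum_sqrt_le_sqrt J fun j => integral_nonneg fun ω => sq_nonneg _

/-- **Averaged conditional covariance bound over a downsampled subimage.**
If `Var(xⱼ | σ(y)) ≤ 1` a.s. for every `j` and `Cov(gⱼ, xⱼ | σ(y)) = 0` a.s. for `j ∈ J`, then
`(1/|J|) Σ_{j∈J} E[Cov(f(x)ⱼ, xⱼ | σ(y))] ≤ ((1/|J|) Σ_{j∈J} E[(f(x)ⱼ − gⱼ)²])^{1/2}`. -/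
theorem avg_condCov_le_sqrt_avg_sq_diff
    {Ω : Type*} [mΩ : MeasurableSpace Ω] (P : Measure Ω) [IsProbabilityMeasure P]
    (m : ℕ) (x y : Ω → EuclideanSpace ℝ (Fin m))
    (hxm : Measurable x) (hym : Measurable y)
    (hx : MemLp x 2 P) (hy : MemLp y 2 P)
    (hvar : ∀ j : Fin m, ∀ᵐ ω ∂P,
      condVar (MeasurableSpace.comap y inferInstance) P (fun ω' => x ω' j) ω ≤ 1)
    (f : EuclideanSpace ℝ (Fin m) → EuclideanSpace ℝ (Fin m)) (hf : Measurable f)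
    (hfx : MemLp (fun ω => f (x ω)) 2 P)
    (J : Finset (Fin m)) (hJ : J.Nonempty)
    (g : Fin m → Ω → ℝ) (hg : ∀ j ∈ J, MemLp (g j) 2 P)
    (hgcov : ∀ j ∈ J, ∀ᵐ ω ∂P,
      condCov (MeasurableSpace.comap y inferInstance) P (g j) (fun ω' => x ω' j) ω = 0) :
    (1 / (J.card : ℝ)) * ∑ j ∈ J, ∫ ω, condCov (MeasurableSpace.comap y inferInstance) P
        (fun ω' => f (x ω') j) (fun ω' => x ω' j) ω ∂P ≤
      Real.sqrt ((1 / (J.card : ℝ)) * ∑ j ∈ J, ∫ ω, (f (x ω) j - g j ω) ^ 2 ∂P) :=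
  avg_condCov_le_sqrt_avg_sq_diff_general (mΩ := mΩ) P m x y hym hx hvar f hfx J g hg hgcov
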